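/- arXiv:2510.10894 — 3 statements merged into one kernel-verified Lean document; each statement's English description precedes it below -/
import Mathlib

section
/- Let A u = f with A symmetric positive definite, u_ms the Galerkin approximation through P, and D a symmetric positive definite matrix. Then ‖u - u_ms‖_A² ≤ ‖f‖_{D⁻¹} · ‖u - u_ms‖_D, where ‖v‖_M² = vᵀ M v. -/
/-!
With `e = u - u_ms`, Galerkin orthogonality `u_msᵀ A e = 0` (a consequence of `B⁻¹ B B⁻¹ = B⁻¹`
for `B = Pᵀ A P`) turns the energy of the error into `eᵀ A e = uᵀ A e = fᵀ e`, and
`fᵀ e = (D⁻¹ f)ᵀ D e` is bounded by Cauchy–Schwarz for the inner product `⟪x, y⟫ = xᵀ D y`.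
-/

open Matrix

theorem Matrix.PosSemidef.dotProduct_mulVec_le_sqrt_mul_sqrt {ι : Type*} [Fintype ι]
    {M : Matrix ι ι ℝ} (hM : M.PosSemidef) (x y : ι → ℝ) :
    x ⬝ᵥ M *ᵥ y ≤ √(x ⬝ᵥ M *ᵥ x) * √(y ⬝ᵥ M *ᵥ y) := by
  let _ := M.toSeminormedAddCommGroup hM
  let _ := M.toInnerProductSpace hM
  have h : (M *ᵥ y) ⬝ᵥ star x ≤ √((M *ᵥ x) ⬝ᵥ star x) * √((M *ᵥ y) ⬝ᵥ star y) :=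
    real_inner_le_norm x y
  simpa only [star_trivial, dotProduct_comm (M *ᵥ _)] using h

theorem Matrix.PosDef.dotProduct_le_sqrt_inv_mul_sqrt {ι : Type*} [Fintype ι] [DecidableEq ι]
    {D : Matrix ι ι ℝ} (hD : D.PosDef) (x y : ι → ℝ) :
    x ⬝ᵥ y ≤ √(x ⬝ᵥ D⁻¹ *ᵥ x) * √(y ⬝ᵥ D *ᵥ y) := by
  have hDx : D *ᵥ D⁻¹ *ᵥ x = x := by
    rw [mulVec_mulVec, mul_nonsing_inv _ (D.isUnit_iff_isUnit_det.mp hD.isUnit), one_mulVec]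
  have h := hD.posSemidef.dotProduct_mulVec_le_sqrt_mul_sqrt (D⁻¹ *ᵥ x) y
  rwa [hDx, dotProduct_comm _ x, ← dotProduct_transpose_mulVec,
    (isHermitian_iff_isSymm.mp hD.isHermitian).eq, hDx, dotProduct_comm y] at h

/-- For singular `B` both sides vanish, since then `B⁻¹ = 0`. -/
theorem Matrix.nonsing_inv_mul_mul_nonsing_inv {ι R : Type*} [Fintype ι] [DecidableEq ι]
    [CommRing R] (B : Matrix ι ι R) : B⁻¹ * B * B⁻¹ = B⁻¹ := by
  by_cases hB : IsUnit B.det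
  · rw [nonsing_inv_mul _ hB, one_mul]
  · simp [nonsing_inv_apply_not_isUnit _ hB]

theorem Matrix.IsSymm.dotProduct_mulVec_nonsing_inv {ι R : Type*} [Fintype ι] [DecidableEq ι]
    [CommRing R] {B : Matrix ι ι R} (hB : B.IsSymm) (y : ι → R) :
    (B⁻¹ *ᵥ y) ⬝ᵥ B *ᵥ B⁻¹ *ᵥ y = (B⁻¹ *ᵥ y) ⬝ᵥ y := by
  rw [dotProduct_comm, dotProduct_mulVec, ← mulVec_transpose, transpose_nonsing_inv, hB.eq,
    mulVec_mulVec, mulVec_mulVec, nonsing_inv_mul_mul_nonsing_inv]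

section Galerkin

variable {ι κ R : Type*} [Fintype ι] [Fintype κ] [DecidableEq κ] [CommRing R]

noncomputable def galerkinApprox (A : Matrix ι ι R) (P : Matrix ι κ R) (f : ι → R) : ι → R :=
  P *ᵥ (Pᵀ * A * P)⁻¹ *ᵥ Pᵀ *ᵥ f

variable {A : Matrix ι ι R} {u f : ι → R}

theorem galerkinApprox_dotProduct_mulVec_error (hA : A.IsSymm) (P : Matrix ι κ R)
    (hf : A *ᵥ u = f) : galerkinApprox A P f ⬝ᵥ A *ᵥ (u - galerkinApprox A P f) = 0 := by
  set x := (Pᵀ * A * P)⁻¹ *ᵥ Pᵀ *ᵥ f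
  have hB : (Pᵀ * A * P).IsSymm := by simp [IsSymm, transpose_mul, hA.eq, Matrix.mul_assoc]
  have hBx : Pᵀ *ᵥ A *ᵥ P *ᵥ x = (Pᵀ * A * P) *ᵥ x := by
    simp only [mulVec_mulVec, Matrix.mul_assoc]
  rw [galerkinApprox, mulVec_sub, dotProduct_sub, sub_eq_zero, hf, dotProduct_comm (P *ᵥ x),
    dotProduct_comm (P *ᵥ x), ← dotProduct_transpose_mulVec P x f,
    ← dotProduct_transpose_mulVec P x, hBx, hB.dotProduct_mulVec_nonsing_inv]

theorem galerkin_error_energy_eq (hA : A.IsSymm) (P : Matrix ι κ R) (hf : A *ᵥ u = f) :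
    (u - galerkinApprox A P f) ⬝ᵥ A *ᵥ (u - galerkinApprox A P f) =
      f ⬝ᵥ (u - galerkinApprox A P f) := by
  rw [sub_dotProduct u, galerkinApprox_dotProduct_mulVec_error hA P hf, sub_zero,
    ← dotProduct_transpose_mulVec, hA.eq, hf, dotProduct_comm]

end Galerkin

theorem galerkin_error_dual_bound_general (n m : ℕ)
    (A D : Matrix (Fin n) (Fin n) ℝ) (P : Matrix (Fin n) (Fin m) ℝ)
    (hA : A.PosDef) (hD : D.PosDef)
    (f u : Fin n → ℝ) (hu : u = A⁻¹.mulVec f)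
    (u_ms : Fin n → ℝ)
    (hms : u_ms = P.mulVec ((Pᵀ * A * P)⁻¹.mulVec (Pᵀ.mulVec f))) :
    (u - u_ms) ⬝ᵥ (A.mulVec (u - u_ms)) ≤
      Real.sqrt (f ⬝ᵥ (D⁻¹.mulVec f)) *
        Real.sqrt ((u - u_ms) ⬝ᵥ (D.mulVec (u - u_ms))) := by
  have hAu : A *ᵥ u = f := by
    rw [hu, mulVec_mulVec, mul_nonsing_inv _ (A.isUnit_iff_isUnit_det.mp hA.isUnit), one_mulVec]
  rw [show u_ms = galerkinApprox A P f from hms,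
    galerkin_error_energy_eq (isHermitian_iff_isSymm.mp hA.isHermitian) P hAu]
  exact hD.dotProduct_le_sqrt_inv_mul_sqrt f _

/-- `‖u - u_ms‖_A² ≤ ‖f‖_{D⁻¹} · ‖u - u_ms‖_D` for the Galerkin approximation. -/
theorem galerkin_error_dual_bound (n m : ℕ)
    (A D : Matrix (Fin n) (Fin n) ℝ) (P : Matrix (Fin n) (Fin m) ℝ)
    (hA : A.PosDef) (hD : D.PosDef) (hP : P.rank = m)
    (f u : Fin n → ℝ) (hu : u = A⁻¹.mulVec f)
    (u_ms : Fin n → ℝ)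
    (hms : u_ms = P.mulVec ((Pᵀ * A * P)⁻¹.mulVec (Pᵀ.mulVec f))) :
    (u - u_ms) ⬝ᵥ (A.mulVec (u - u_ms)) ≤
      Real.sqrt (f ⬝ᵥ (D⁻¹.mulVec f)) *
        Real.sqrt ((u - u_ms) ⬝ᵥ (D.mulVec (u - u_ms))) :=
  galerkin_error_dual_bound_general n m A D P hA hD f u hu u_ms hms
end

section
/- Let A = [[A_ff, A_fc],[A_cf, A_cc]] be symmetric with A_ff invertible, W = -A_ff⁻¹ A_fc, P = [[W],[I]], R = Pᵀ, S = A_cc - A_cf A_ff⁻¹ A_fc. Then the Galerkin projection Π = P (R A P)⁻¹ R A (assuming S invertible) has the block form Π = [[0, W],[0, I]]. -/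
/-!
Symmetry of `A` turns `R = Pᵀ` into `[-A_cf A_ff⁻¹, I]`, which is one step of block
elimination: `R A = [0, S]`. Hence `R A P = S` and
`P S⁻¹ R A = [[W],[I]] S⁻¹ [0, S] = [[0, W],[0, I]]`.
-/

open Matrix

namespace Matrix

variable {m n α : Type*} [DecidableEq n] [CommRing α]

lemma transpose_fromRows_neg_inv_mul_one [Fintype m] [DecidableEq m]
    {Aff : Matrix m m α} {Afc : Matrix m n α} {Acf : Matrix n m α} {Acc : Matrix n n α}
    (h : (fromBlocks Aff Afc Acf Acc).IsSymm) :
    (fromRows (-(Aff⁻¹ * Afc)) (1 : Matrix n n α))ᵀ = fromCols (-(Acf * Aff⁻¹)) 1 := by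
  obtain ⟨hff, hfc, -, -⟩ := isSymm_fromBlocks_iff.mp h
  rw [transpose_fromRows, transpose_neg, transpose_mul, transpose_nonsing_inv, hff.eq, hfc,
    transpose_one]

variable [Fintype n]

lemma fromCols_neg_mul_inv_one_mul_fromBlocks [Fintype m] [DecidableEq m]
    {Aff : Matrix m m α} (Afc : Matrix m n α) (Acf : Matrix n m α) (Acc : Matrix n n α)
    (hff : IsUnit Aff) :
    fromCols (-(Acf * Aff⁻¹)) (1 : Matrix n n α) * fromBlocks Aff Afc Acf Acc
      = fromCols 0 (Acc - Acf * Aff⁻¹ * Afc) := by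
  have hinv : Aff⁻¹ * Aff = 1 := nonsing_inv_mul Aff ((isUnit_iff_isUnit_det Aff).mp hff)
  rw [fromCols_mul_fromBlocks]
  simp only [Matrix.neg_mul, Matrix.mul_assoc, hinv, Matrix.mul_one, Matrix.one_mul,
    neg_add_cancel, neg_add_eq_sub]

lemma fromRows_mul_inv_mul_fromCols_zero (W : Matrix m n α) {S : Matrix n n α} (hS : IsUnit S) :
    fromRows W (1 : Matrix n n α) * S⁻¹ * fromCols (0 : Matrix n m α) S
      = fromBlocks 0 W 0 1 := by
  have hinv : S⁻¹ * S = 1 := nonsing_inv_mul S ((isUnit_iff_isUnit_det S).mp hS)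
  rw [fromRows_mul, fromRows_mul_fromCols]
  simp only [Matrix.mul_zero, Matrix.mul_assoc, hinv, Matrix.mul_one, Matrix.one_mul]

end Matrix

/-- For ideal interpolation `P = [[W],[I]]` with `W = -A_ff⁻¹ A_fc` and `R = Pᵀ`,
the Galerkin projection `Π = P (R A P)⁻¹ R A` has block form `[[0, W],[0, I]]`. -/
theorem ideal_interp_projection_block_form (nf nc : ℕ)
    (Aff : Matrix (Fin nf) (Fin nf) ℝ) (Afc : Matrix (Fin nf) (Fin nc) ℝ)
    (Acf : Matrix (Fin nc) (Fin nf) ℝ) (Acc : Matrix (Fin nc) (Fin nc) ℝ)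
    (A : Matrix (Fin nf ⊕ Fin nc) (Fin nf ⊕ Fin nc) ℝ)
    (hA : A = fromBlocks Aff Afc Acf Acc)
    (hsym : A.IsSymm)
    (hff : IsUnit Aff)
    (W : Matrix (Fin nf) (Fin nc) ℝ) (hW : W = -(Aff⁻¹ * Afc))
    (S : Matrix (Fin nc) (Fin nc) ℝ) (hS : S = Acc - Acf * Aff⁻¹ * Afc)
    (hSu : IsUnit S)
    (P : Matrix (Fin nf ⊕ Fin nc) (Fin nc) ℝ) (hP : P = fromRows W 1)
    (R : Matrix (Fin nc) (Fin nf ⊕ Fin nc) ℝ) (hR : R = Pᵀ) :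
    P * (R * A * P)⁻¹ * R * A = fromBlocks 0 W 0 1 := by
  subst hA
  have hRA : R * fromBlocks Aff Afc Acf Acc = fromCols 0 S := by
    rw [hR, hP, hW, transpose_fromRows_neg_inv_mul_one hsym,
      fromCols_neg_mul_inv_one_mul_fromBlocks _ _ _ hff, hS]
  have hRAP : R * fromBlocks Aff Afc Acf Acc * P = S := by
    rw [hRA, hP, fromCols_mul_fromRows, Matrix.zero_mul, Matrix.mul_one, zero_add]
  rw [hRAP, Matrix.mul_assoc _ R, hRA, hP, fromRows_mul_inv_mul_fromCols_zero W hSu]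
end

section
/- Let A be symmetric positive definite with 2×2 block partition, W = -A_ff⁻¹ A_fc, P = [[W],[I]]. Then among all interpolation operators of the form Q = [[X],[I]] with arbitrary X, the ideal interpolation P minimizes the maximal energy of interpolation in the sense that for every coarse vector v_c, ‖P v_c‖_A ≤ ‖Q v_c‖_A; equivalently (P v_c)ᵀ A (P v_c) = v_cᵀ S v_c ≤ (Q v_c)ᵀ A (Q v_c) for all X and v_c, where S = A_cc - A_cf A_ff⁻¹ A_fc. -/
/-!
Completing the square: with `W = -A_ff⁻¹ A_fc`, the energy of `Q = [[X],[I]]` splits as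
`‖Q v‖_A² = ((X - W) v)ᵀ A_ff ((X - W) v) + vᵀ S v`, and the first term is nonnegative and
vanishes at `X = W`.
-/

open Matrix

namespace Matrix

variable {m n R : Type*} [Fintype m] [Fintype n] [DecidableEq m] [DecidableEq n]
  [CommRing R] [StarRing R] [TrivialStar R]

theorem schur_complement_eq₁₁_fromRows_one {Aff : Matrix m m R} [Invertible Aff]
    (hAff : Aff.IsHermitian) (Afc : Matrix m n R) (Acc : Matrix n n R) (X : Matrix m n R)
    (v : n → R) :
    (fromRows X 1 *ᵥ v) ⬝ᵥ fromBlocks Aff Afc Afcᵀ Acc *ᵥ (fromRows X 1 *ᵥ v) =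
      ((X + Aff⁻¹ * Afc) *ᵥ v) ⬝ᵥ Aff *ᵥ ((X + Aff⁻¹ * Afc) *ᵥ v) +
        v ⬝ᵥ (Acc - Afcᵀ * Aff⁻¹ * Afc) *ᵥ v := by
  simpa only [star_trivial, ← dotProduct_mulVec, conjTranspose_eq_transpose_of_trivial,
    fromRows_mulVec, one_mulVec, add_mulVec] using schur_complement_eq₁₁ Afc Acc (X *ᵥ v) v hAff

end Matrix

/-- Energy optimality of ideal interpolation: among all interpolation operators
`Q = [[X],[I]]`, ideal interpolation `P = [[W],[I]]` with `W = -A_ff⁻¹ A_fc`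
minimizes the interpolation energy, and `(P v_c)ᵀ A (P v_c) = v_cᵀ S v_c`. -/
theorem ideal_interp_energy_optimal (nf nc : ℕ)
    (Aff : Matrix (Fin nf) (Fin nf) ℝ) (Afc : Matrix (Fin nf) (Fin nc) ℝ)
    (Acf : Matrix (Fin nc) (Fin nf) ℝ) (Acc : Matrix (Fin nc) (Fin nc) ℝ)
    (A : Matrix (Fin nf ⊕ Fin nc) (Fin nf ⊕ Fin nc) ℝ)
    (hA : A = fromBlocks Aff Afc Acf Acc)
    (hApd : A.PosDef)
    (W : Matrix (Fin nf) (Fin nc) ℝ) (hW : W = -(Aff⁻¹ * Afc))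
    (S : Matrix (Fin nc) (Fin nc) ℝ) (hS : S = Acc - Acf * Aff⁻¹ * Afc)
    (P : Matrix (Fin nf ⊕ Fin nc) (Fin nc) ℝ) (hP : P = fromRows W 1) :
    ∀ (X : Matrix (Fin nf) (Fin nc) ℝ) (vc : Fin nc → ℝ),
      (P.mulVec vc) ⬝ᵥ A.mulVec (P.mulVec vc) = vc ⬝ᵥ S.mulVec vc ∧
        (P.mulVec vc) ⬝ᵥ A.mulVec (P.mulVec vc) ≤
          ((fromRows X 1).mulVec vc) ⬝ᵥ A.mulVec ((fromRows X 1).mulVec vc) := by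
  intro X vc
  subst hA hW hS hP
  obtain ⟨hAff_herm, hAcf, -, -⟩ := isHermitian_fromBlocks_iff.1 hApd.isHermitian
  rw [conjTranspose_eq_transpose_of_trivial] at hAcf
  subst hAcf
  have hAff : Aff.PosDef := hApd.submatrix Sum.inl_injective
  have := hAff.isUnit.invertible
  have hP_energy := schur_complement_eq₁₁_fromRows_one hAff_herm Afc Acc (-(Aff⁻¹ * Afc)) vc
  rw [neg_add_cancel, zero_mulVec, zero_dotProduct, zero_add] at hP_energy
  refine ⟨hP_energy, ?_⟩
  rw [hP_energy, schur_complement_eq₁₁_fromRows_one hAff_herm, le_add_iff_nonneg_left]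
  simpa only [star_trivial] using hAff.posSemidef.dotProduct_mulVec_nonneg _
end
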